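/- Let p > 1 and δ ≥ 0. Define A(a) = (δ+|a|)^{p-2} a, φ'(t) = (δ+t)^{p-2} t, φ*(t) = sup_{s≥0}(st − φ(s)) where φ(t)=∫₀ᵗ φ'(s) ds, and for c ≥ 0 the shifted conjugate (φ*)_c(t) := ∫₀ᵗ (φ*)'(c+s)·(s/(c+s)) ds. Also define (φ_c)*(t) := sup_{s≥0}(st − φ_c(s)) where φ_c(t)=∫₀ᵗ φ'(c+s)(s/(c+s)) ds. Then there exist constants depending only on p such that for all a ∈ ℝ^d and t ≥ 0: (φ*)_{|A(a)|}(t) ∼ (φ_{|a|})*(t), i.e., each side is bounded above and below by constant multiples of the other. -/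

import Mathlib

/-- `φ(t) = ∫₀ᵗ (δ+s)^(p-2) s ds`. -/
noncomputable def phiFn (p δ t : ℝ) : ℝ :=
  ∫ s in (0:ℝ)..t, (δ + s) ^ (p - 2) * s

/-- The Fenchel conjugate `ψ*(t) = sup_{s ≥ 0} (s t − ψ s)`. -/
noncomputable def fconj (ψ : ℝ → ℝ) (t : ℝ) : ℝ :=
  sSup ((fun s => s * t - ψ s) '' Set.Ici 0)

/-- The shifted N-function `φ_c(t) = ∫₀ᵗ φ'(c+s) · s/(c+s) ds`, where
`φ'(r) = (δ+r)^(p-2) r`. -/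
noncomputable def shiftPhi (p δ c t : ℝ) : ℝ :=
  ∫ s in (0:ℝ)..t, ((δ + (c + s)) ^ (p - 2) * (c + s)) * (s / (c + s))

/-- The shift of a general N-function `ψ` by `c ≥ 0`:
`ψ_c(t) = ∫₀ᵗ ψ'(c+s) · s/(c+s) ds`. -/
noncomputable def shiftOf (ψ : ℝ → ℝ) (c t : ℝ) : ℝ :=
  ∫ s in (0:ℝ)..t, deriv ψ (c + s) * (s / (c + s))


/-!
Write `e = φ'` for the odd extension of `r ↦ (δ + r)^(p-2) r` and `e_a` for the same map with
`δ` replaced by `δ + a`; both are increasing bijections of `ℝ`. Since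
`φ'(a + s) · s / (a + s) = (δ + a + s)^(p-2) s`, the shifted function `φ_a` is the `N`-function
with derivative `e_a`.

For an `N`-function `ψ` with `ψ' = e`, the conjugate satisfies `(ψ*)' = e⁻¹` on `[0, ∞)` and
`ψ*(t)` lies between `(t/2) e⁻¹(t/2)` and `t e⁻¹(t)`. Likewise `(φ*)_c(t) = ∫₀ᵗ G` with the
monotone integrand `G(s) = e⁻¹(c + s) · s / (c + s)`, `c = φ'(a)`, lies between `(t/2) G(t/2)`
and `t G(t)`. The scaling `Λ^m φ'(r) ≤ φ'(Λ r)` (`Λ ≥ 1`, `m = min 1 (p - 1)`) makes `e_a⁻¹`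
doubling, so it remains to show `G(t) ∼ e_a⁻¹(t)`. With `R = e⁻¹(c + t)` one has
`t = (δ + R)^(p-2) G(t)` and `e_a(G(t)) = (δ + a + G(t))^(p-2) G(t)`; the bases are comparable
(`a, G(t) ≤ R ≤ 2^(1/m) (a + G(t))`), so `e_a(G(t))` is comparable to `t`, and the scaling
inverts this to `G(t) ∼ e_a⁻¹(t)`.
-/

open Set Filter Topology intervalIntegral

namespace MonotoneOn

variable {f : ℝ → ℝ} {x y : ℝ}

theorem mul_sub_le_intervalIntegral (hxy : x ≤ y) (hf : MonotoneOn f (Icc x y)) :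
    f x * (y - x) ≤ ∫ s in x..y, f s := by
  have : ∫ _ in x..y, f x ≤ ∫ s in x..y, f s := integral_mono_on hxy intervalIntegrable_const
    (hf.mono (uIcc_of_le hxy).subset).intervalIntegrable fun s hs => hf ⟨le_rfl, hxy⟩ hs hs.1
  simpa [mul_comm] using this

theorem intervalIntegral_le_mul_sub (hxy : x ≤ y) (hf : MonotoneOn f (Icc x y)) :
    ∫ s in x..y, f s ≤ f y * (y - x) := by
  have : ∫ s in x..y, f s ≤ ∫ _ in x..y, f y := integral_mono_on hxy
    (hf.mono (uIcc_of_le hxy).subset).intervalIntegrable intervalIntegrable_const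
    fun s hs => hf hs ⟨hxy, le_rfl⟩ hs.2
  simpa [mul_comm] using this

theorem half_mul_le_intervalIntegral {t : ℝ} (ht : 0 ≤ t) (hf : MonotoneOn f (Icc 0 t))
    (hf0 : 0 ≤ f 0) : t / 2 * f (t / 2) ≤ ∫ s in (0:ℝ)..t, f s := by
  have hf₁ : MonotoneOn f (Icc 0 (t / 2)) := hf.mono (Icc_subset_Icc le_rfl (by linarith))
  have hf₂ : MonotoneOn f (Icc (t / 2) t) := hf.mono (Icc_subset_Icc (by linarith) le_rfl)
  have h₁ := hf₁.mul_sub_le_intervalIntegral (by linarith)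
  have h₂ := hf₂.mul_sub_le_intervalIntegral (by linarith)
  rw [← integral_add_adjacent_intervals
    (hf₁.mono (uIcc_of_le (by linarith)).subset).intervalIntegrable
    (hf₂.mono (uIcc_of_le (by linarith)).subset).intervalIntegrable]
  nlinarith [mul_nonneg hf0 ht]

end MonotoneOn

theorem hasDerivAt_of_forall_add_mul_sub_le {M g : ℝ → ℝ} {x : ℝ}
    (hM : ∀ u w, M u + g u * (w - u) ≤ M w) (hg : ContinuousAt g x) :
    HasDerivAt M (g x) x := by
  have hslope : ∀ v ≠ x, slope M x v ∈ uIcc (g x) (g v) := by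
    intro v hv
    have h₁ := hM x v
    have h₂ := hM v x
    rw [slope_def_field]
    rcases hv.lt_or_gt with hvx | hxv
    · have hd : v - x < 0 := sub_neg.2 hvx
      refine mem_uIcc.2 (Or.inr ⟨?_, ?_⟩)
      · rw [le_div_iff_of_neg hd]; linarith
      · rw [div_le_iff_of_neg hd]; linarith
    · have hd : 0 < v - x := sub_pos.2 hxv
      refine mem_uIcc.2 (Or.inl ⟨?_, ?_⟩)
      · rw [le_div_iff₀ hd]; linarith
      · rw [div_le_iff₀ hd]; linarith
  have hg' : Tendsto g (𝓝[≠] x) (𝓝 (g x)) := hg.tendsto.mono_left nhdsWithin_le_nhds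
  rw [hasDerivAt_iff_tendsto_slope]
  refine tendsto_of_tendsto_of_tendsto_of_le_of_le'
    (by simpa using (tendsto_const_nhds (x := g x)).min hg')
    (by simpa using (tendsto_const_nhds (x := g x)).max hg') ?_ ?_ <;>
  filter_upwards [self_mem_nhdsWithin] with v hv
  exacts [(hslope v hv).1, (hslope v hv).2]

noncomputable def primitive (f : ℝ → ℝ) (t : ℝ) : ℝ := ∫ s in (0:ℝ)..t, f s

@[simp]
theorem primitive_zero (f : ℝ → ℝ) : primitive f 0 = 0 := integral_same

section Conjugate

variable (e : ℝ ≃o ℝ)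

theorem mul_sub_le_primitive_sub (x y : ℝ) :
    e x * (y - x) ≤ primitive e y - primitive e x := by
  rw [primitive, primitive, integral_interval_sub_left e.monotone.intervalIntegrable
    e.monotone.intervalIntegrable]
  rcases le_total x y with hxy | hyx
  · exact (e.monotone.monotoneOn _).mul_sub_le_intervalIntegral hxy
  · have := (e.monotone.monotoneOn _).intervalIntegral_le_mul_sub hyx
    rw [integral_symm]
    linarith

theorem primitive_le_mul (s : ℝ) : primitive e s ≤ s * e s := by
  have := mul_sub_le_primitive_sub e s 0
  rw [primitive_zero] at this
  linarith

variable {e}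

theorem primitive_nonneg (he0 : e 0 = 0) (s : ℝ) : 0 ≤ primitive e s := by
  simpa [he0] using mul_sub_le_primitive_sub e 0 s

theorem OrderIso.symm_nonneg (he0 : e 0 = 0) {u : ℝ} (hu : 0 ≤ u) : 0 ≤ e.symm u :=
  e.le_symm_apply.2 (he0.le.trans hu)

/- The supremum in `fconj` runs over `s ≥ 0` only, so it is attained at `e⁻¹ (max w 0)`;
in particular `fconj (primitive e)` vanishes on `(-∞, 0]`. -/
theorem mul_sub_primitive_le (he0 : e 0 = 0) {s : ℝ} (hs : 0 ≤ s) (w : ℝ) :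
    s * w - primitive e s ≤ e.symm (max w 0) * w - primitive e (e.symm (max w 0)) := by
  have h := mul_sub_le_primitive_sub e (e.symm (max w 0)) s
  rw [e.apply_symm_apply] at h
  have hw : e.symm (max w 0) * w = e.symm (max w 0) * max w 0 := by
    rcases le_total w 0 with hw | hw
    · simp [max_eq_right hw, e.symm_apply_eq.2 he0.symm]
    · rw [max_eq_left hw]
  nlinarith [mul_le_mul_of_nonneg_left (le_max_left w 0) hs]

theorem fconj_primitive (he0 : e 0 = 0) (w : ℝ) :
    fconj (primitive e) w = e.symm (max w 0) * w - primitive e (e.symm (max w 0)) :=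
  IsGreatest.csSup_eq ⟨mem_image_of_mem _ (e.symm_nonneg he0 (le_max_right w 0)),
    by rintro _ ⟨s, hs, rfl⟩; exact mul_sub_primitive_le he0 hs w⟩

theorem mul_sub_primitive_le_fconj (he0 : e 0 = 0) {s : ℝ} (hs : 0 ≤ s) (w : ℝ) :
    s * w - primitive e s ≤ fconj (primitive e) w :=
  (fconj_primitive he0 w).symm ▸ mul_sub_primitive_le he0 hs w

theorem hasDerivAt_fconj_primitive (he0 : e 0 = 0) (u : ℝ) :
    HasDerivAt (fconj (primitive e)) (e.symm (max u 0)) u := by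
  refine hasDerivAt_of_forall_add_mul_sub_le (g := fun u => e.symm (max u 0)) (fun u w => ?_)
    (e.symm.continuous.comp (continuous_id.max continuous_const)).continuousAt
  have := mul_sub_primitive_le_fconj he0 (e.symm_nonneg he0 (le_max_right u 0)) w
  rw [fconj_primitive he0 u]
  linarith

theorem fconj_primitive_le (he0 : e 0 = 0) {u : ℝ} (hu : 0 ≤ u) :
    fconj (primitive e) u ≤ u * e.symm u := by
  rw [fconj_primitive he0, max_eq_left hu]
  linarith [primitive_nonneg he0 (e.symm u)]

theorem half_mul_le_fconj_primitive (he0 : e 0 = 0) {u : ℝ} (hu : 0 ≤ u) :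
    u / 2 * e.symm (u / 2) ≤ fconj (primitive e) u := by
  have h₁ := mul_sub_primitive_le_fconj he0 (e.symm_nonneg he0 (by linarith : 0 ≤ u / 2)) u
  have h₂ := primitive_le_mul e (e.symm (u / 2))
  rw [e.apply_symm_apply] at h₂
  linarith

theorem monotoneOn_symm_add_mul_div (he0 : e 0 = 0) {c : ℝ} (hc : 0 ≤ c) :
    MonotoneOn (fun s => e.symm (c + s) * (s / (c + s))) (Ici 0) := by
  intro x (hx : 0 ≤ x) y (hy : 0 ≤ y) hxy
  have hfrac : x / (c + x) ≤ y / (c + y) := by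
    rcases (add_nonneg hc hx).eq_or_lt with h0 | h0
    · rw [← h0, div_zero]; positivity
    · rw [div_le_div_iff₀ h0 (by linarith)]; nlinarith
  exact mul_le_mul (e.symm.monotone (by linarith)) hfrac (by positivity)
    (e.symm_nonneg he0 (by linarith))

theorem shiftOf_fconj_primitive (he0 : e 0 = 0) {c t : ℝ} (hc : 0 ≤ c) (ht : 0 ≤ t) :
    shiftOf (fconj (primitive e)) c t = ∫ s in (0:ℝ)..t, e.symm (c + s) * (s / (c + s)) := by
  refine integral_congr fun s hs => ?_
  have hs0 : 0 ≤ s := by rw [uIcc_of_le ht] at hs; exact hs.1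
  simp only [(hasDerivAt_fconj_primitive he0 _).deriv, max_eq_left (add_nonneg hc hs0)]

end Conjugate

section Comparison

variable {e e' : ℝ ≃o ℝ} {c t Q B : ℝ}

theorem fconj_primitive_le_mul_shiftOf (he0 : e 0 = 0) (he0' : e' 0 = 0) (hc : 0 ≤ c)
    (ht : 0 ≤ t) (hQ : 0 ≤ Q) (hB : 0 ≤ B) (hdouble : e'.symm t ≤ Q * e'.symm (t / 2))
    (hcomp : e'.symm (t / 2) ≤ B * (e.symm (c + t / 2) * (t / 2 / (c + t / 2)))) :
    fconj (primitive e') t ≤ 2 * Q * B * shiftOf (fconj (primitive e)) c t := by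
  have hint := ((monotoneOn_symm_add_mul_div he0 hc).mono
    Icc_subset_Ici_self).half_mul_le_intervalIntegral ht (by simp)
  rw [shiftOf_fconj_primitive he0 hc ht]
  calc fconj (primitive e') t ≤ t * e'.symm t := fconj_primitive_le he0' ht
    _ ≤ t * (Q * (B * (e.symm (c + t / 2) * (t / 2 / (c + t / 2))))) :=
        mul_le_mul_of_nonneg_left (hdouble.trans (mul_le_mul_of_nonneg_left hcomp hQ)) ht
    _ = 2 * Q * B * (t / 2 * (e.symm (c + t / 2) * (t / 2 / (c + t / 2)))) := by ring
    _ ≤ _ := mul_le_mul_of_nonneg_left hint (by positivity)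

theorem shiftOf_le_mul_fconj_primitive (he0 : e 0 = 0) (he0' : e' 0 = 0) (hc : 0 ≤ c)
    (ht : 0 ≤ t) (hQ : 0 ≤ Q) (hB : 0 ≤ B) (hdouble : e'.symm t ≤ Q * e'.symm (t / 2))
    (hcomp : e.symm (c + t) * (t / (c + t)) ≤ B * e'.symm t) :
    shiftOf (fconj (primitive e)) c t ≤ 2 * Q * B * fconj (primitive e') t := by
  have hint := ((monotoneOn_symm_add_mul_div he0 hc).mono
    Icc_subset_Ici_self).intervalIntegral_le_mul_sub ht
  rw [shiftOf_fconj_primitive he0 hc ht]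
  calc (∫ s in (0:ℝ)..t, e.symm (c + s) * (s / (c + s)))
      ≤ e.symm (c + t) * (t / (c + t)) * t := by simpa using hint
    _ ≤ B * (Q * e'.symm (t / 2)) * t :=
        mul_le_mul_of_nonneg_right (hcomp.trans (mul_le_mul_of_nonneg_left hdouble hB)) ht
    _ = 2 * Q * B * (t / 2 * e'.symm (t / 2)) := by ring
    _ ≤ _ := mul_le_mul_of_nonneg_left (half_mul_le_fconj_primitive he0' ht) (by positivity)

end Comparison

theorem OrderIso.symm_mul_le_rpow_inv_mul {e : ℝ ≃o ℝ} {m : ℝ} (he0 : e 0 = 0) (hm : 0 < m)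
    (he : ∀ Λ r : ℝ, 1 ≤ Λ → 0 ≤ r → Λ ^ m * e r ≤ e (Λ * r)) {Θ u : ℝ} (hΘ : 1 ≤ Θ)
    (hu : 0 ≤ u) : e.symm (Θ * u) ≤ Θ ^ m⁻¹ * e.symm u := by
  have h := he (Θ ^ m⁻¹) (e.symm u) (Real.one_le_rpow hΘ (inv_nonneg.2 hm.le))
    (e.symm_nonneg he0 hu)
  rw [← Real.rpow_mul (by linarith), inv_mul_cancel₀ hm.ne', Real.rpow_one,
    e.apply_symm_apply] at h
  exact e.symm_apply_le.2 h

theorem rpow_le_rpow_abs_mul_rpow {x y L : ℝ} (q : ℝ) (hx : 0 < x) (hy : 0 < y) (hL : 0 < L)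
    (hxy : x ≤ L * y) (hyx : y ≤ L * x) : x ^ q ≤ L ^ |q| * y ^ q := by
  rcases le_total 0 q with hq | hq
  · rw [abs_of_nonneg hq, ← Real.mul_rpow hL.le hy.le]
    exact Real.rpow_le_rpow hx.le hxy hq
  · have h := Real.rpow_le_rpow_of_nonpos (div_pos hy hL) ((div_le_iff₀' hL).2 hyx) hq
    rwa [Real.div_rpow hy.le hL.le, div_eq_inv_mul, ← Real.rpow_neg hL.le,
      ← abs_of_nonpos hq] at h

/-- The odd extension of `φ'(r) = (δ + r)^(p-2) r`, i.e. the map `A` of the statement on `ℝ`. -/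
noncomputable def phiDeriv (p δ r : ℝ) : ℝ := (δ + |r|) ^ (p - 2) * r

noncomputable def lowerIndex (p : ℝ) : ℝ := min 1 (p - 1)

noncomputable def doublingConst (p : ℝ) : ℝ := 2 ^ (lowerIndex p)⁻¹

noncomputable def shiftConst (p : ℝ) : ℝ := (doublingConst p ^ |p - 2|) ^ (lowerIndex p)⁻¹

section PhiDeriv

variable {p δ : ℝ}

theorem lowerIndex_pos (hp : 1 < p) : 0 < lowerIndex p := lt_min one_pos (by linarith)

theorem two_le_doublingConst (hp : 1 < p) : 2 ≤ doublingConst p := by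
  have h := Real.rpow_le_rpow_of_exponent_le one_le_two
    (one_le_inv₀ (lowerIndex_pos hp) |>.2 (min_le_left _ _))
  rwa [Real.rpow_one] at h

theorem one_le_shiftConst (hp : 1 < p) : 1 ≤ shiftConst p :=
  Real.one_le_rpow (Real.one_le_rpow (by linarith [two_le_doublingConst hp]) (abs_nonneg _))
    (inv_nonneg.2 (lowerIndex_pos hp).le)

@[simp]
theorem phiDeriv_zero : phiDeriv p δ 0 = 0 := by simp [phiDeriv]

theorem phiDeriv_of_nonneg {r : ℝ} (hr : 0 ≤ r) : phiDeriv p δ r = (δ + r) ^ (p - 2) * r := by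
  rw [phiDeriv, abs_of_nonneg hr]

theorem phiDeriv_neg (r : ℝ) : phiDeriv p δ (-r) = -phiDeriv p δ r := by
  simp [phiDeriv]

theorem phiDeriv_pos (hδ : 0 ≤ δ) {r : ℝ} (hr : 0 < r) : 0 < phiDeriv p δ r := by
  rw [phiDeriv_of_nonneg hr.le]
  exact mul_pos (Real.rpow_pos_of_pos (by linarith) _) hr

theorem phiDeriv_nonneg (hδ : 0 ≤ δ) {r : ℝ} (hr : 0 ≤ r) : 0 ≤ phiDeriv p δ r := by
  rw [phiDeriv_of_nonneg hr]
  positivity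

theorem norm_rpow_smul {E : Type*} [NormedAddCommGroup E] [NormedSpace ℝ E] (hδ : 0 ≤ δ)
    (a : E) : ‖(δ + ‖a‖) ^ (p - 2) • a‖ = phiDeriv p δ ‖a‖ := by
  rw [norm_smul, Real.norm_eq_abs, abs_of_nonneg (by positivity),
    phiDeriv_of_nonneg (norm_nonneg a)]

theorem rpow_lowerIndex_mul_phiDeriv_le (hδ : 0 ≤ δ) {Λ r : ℝ} (hΛ : 1 ≤ Λ) (hr : 0 ≤ r) :
    Λ ^ lowerIndex p * phiDeriv p δ r ≤ phiDeriv p δ (Λ * r) := by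
  rcases hr.eq_or_lt with rfl | hr
  · simp
  have hΛ0 : 0 < Λ := by linarith
  have hδr : 0 < δ + r := by linarith
  rw [phiDeriv_of_nonneg hr.le, phiDeriv_of_nonneg (by positivity)]
  rcases le_total 2 p with hp2 | hp2
  · have h : (δ + r) ^ (p - 2) ≤ (δ + Λ * r) ^ (p - 2) :=
      Real.rpow_le_rpow hδr.le (by nlinarith) (by linarith)
    rw [lowerIndex, min_eq_left (by linarith), Real.rpow_one]
    calc Λ * ((δ + r) ^ (p - 2) * r) = (δ + r) ^ (p - 2) * (Λ * r) := by ring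
      _ ≤ (δ + Λ * r) ^ (p - 2) * (Λ * r) := by gcongr
  · have h : (Λ * (δ + r)) ^ (p - 2) ≤ (δ + Λ * r) ^ (p - 2) :=
      Real.rpow_le_rpow_of_nonpos (by positivity) (by nlinarith) (by linarith)
    rw [Real.mul_rpow hΛ0.le hδr.le] at h
    rw [lowerIndex, min_eq_right (by linarith), show p - 1 = p - 2 + 1 by ring,
      Real.rpow_add_one hΛ0.ne']
    calc Λ ^ (p - 2) * Λ * ((δ + r) ^ (p - 2) * r)
        = Λ ^ (p - 2) * (δ + r) ^ (p - 2) * (Λ * r) := by ring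
      _ ≤ (δ + Λ * r) ^ (p - 2) * (Λ * r) := by gcongr

theorem phiDeriv_strictMono (hp : 1 < p) (hδ : 0 ≤ δ) : StrictMono (phiDeriv p δ) := by
  refine strictMono_of_odd_strictMonoOn_nonneg phiDeriv_neg fun r (hr : 0 ≤ r) r' _ hlt => ?_
  rcases hr.eq_or_lt with rfl | hr
  · simpa using phiDeriv_pos hδ hlt
  have hΛ : 1 < r' / r := (one_lt_div hr).2 hlt
  have h := rpow_lowerIndex_mul_phiDeriv_le (p := p) hδ hΛ.le hr.le
  rw [div_mul_cancel₀ _ hr.ne'] at h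
  nlinarith [Real.one_lt_rpow hΛ (lowerIndex_pos hp), phiDeriv_pos (p := p) hδ hr]

theorem continuous_phiDeriv (hp : 1 < p) (hδ : 0 ≤ δ) : Continuous (phiDeriv p δ) := by
  refine continuous_iff_continuousAt.2 fun r => ?_
  by_cases h : δ + |r| = 0
  · obtain ⟨rfl, rfl⟩ : δ = 0 ∧ r = 0 :=
      ⟨by linarith [abs_nonneg r], abs_eq_zero.1 (by linarith [abs_nonneg r])⟩
    have hnorm : ∀ x, ‖phiDeriv p 0 x‖ = |x| ^ (p - 1) := fun x => by
      rw [phiDeriv, zero_add, Real.norm_eq_abs, abs_mul, abs_of_nonneg (by positivity),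
        show p - 1 = p - 2 + 1 by ring, Real.rpow_add_one' (abs_nonneg x) (by linarith)]
    have hcont : ContinuousAt (fun x : ℝ => |x| ^ (p - 1)) 0 :=
      continuous_abs.continuousAt.rpow_const (Or.inr (by linarith))
    have hlim : Tendsto (fun x : ℝ => |x| ^ (p - 1)) (𝓝 0) (𝓝 0) := by
      simpa [Real.zero_rpow (by linarith : p - 1 ≠ 0)] using hcont.tendsto
    simpa [ContinuousAt] using squeeze_zero_norm (fun x => (hnorm x).le) hlim
  · exact ((continuous_const.add continuous_abs).continuousAt.rpow_const (Or.inl h)).mul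
      continuousAt_id

theorem tendsto_phiDeriv_atTop (hp : 1 < p) (hδ : 0 ≤ δ) :
    Tendsto (phiDeriv p δ) atTop atTop := by
  refine tendsto_atTop_mono' _ ?_ ((tendsto_rpow_atTop (lowerIndex_pos hp)).atTop_mul_const
    (phiDeriv_pos (p := p) hδ one_pos))
  filter_upwards [eventually_ge_atTop 1] with r hr
  simpa using rpow_lowerIndex_mul_phiDeriv_le hδ hr zero_le_one

theorem phiDeriv_surjective (hp : 1 < p) (hδ : 0 ≤ δ) : Function.Surjective (phiDeriv p δ) := by
  have htop := tendsto_phiDeriv_atTop hp hδ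
  refine (continuous_phiDeriv hp hδ).surjective htop ?_
  refine (tendsto_neg_atTop_atBot.comp (htop.comp tendsto_neg_atBot_atTop)).congr fun r => ?_
  simp [phiDeriv_neg]

noncomputable def phiDerivIso (hp : 1 < p) (hδ : 0 ≤ δ) : ℝ ≃o ℝ :=
  StrictMono.orderIsoOfSurjective (phiDeriv p δ) (phiDeriv_strictMono hp hδ)
    (phiDeriv_surjective hp hδ)

@[simp]
theorem coe_phiDerivIso (hp : 1 < p) (hδ : 0 ≤ δ) : ⇑(phiDerivIso hp hδ) = phiDeriv p δ :=
  StrictMono.coe_orderIsoOfSurjective _ _ _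

@[simp]
theorem phiDerivIso_symm_zero (hp : 1 < p) (hδ : 0 ≤ δ) : (phiDerivIso hp hδ).symm 0 = 0 :=
  (phiDerivIso hp hδ).symm_apply_eq.2 (by simp)

theorem phiDerivIso_symm_mul_le (hp : 1 < p) (hδ : 0 ≤ δ) {Θ u : ℝ} (hΘ : 1 ≤ Θ) (hu : 0 ≤ u) :
    (phiDerivIso hp hδ).symm (Θ * u) ≤ Θ ^ (lowerIndex p)⁻¹ * (phiDerivIso hp hδ).symm u :=
  OrderIso.symm_mul_le_rpow_inv_mul (by simp) (lowerIndex_pos hp)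
    (fun _ _ hΛ hr => by simpa using rpow_lowerIndex_mul_phiDeriv_le hδ hΛ hr) hΘ hu

theorem phiDerivIso_symm_le_doublingConst_mul (hp : 1 < p) (hδ : 0 ≤ δ) {u : ℝ} (hu : 0 ≤ u) :
    (phiDerivIso hp hδ).symm u ≤ doublingConst p * (phiDerivIso hp hδ).symm (u / 2) := by
  simpa [doublingConst, mul_div_cancel₀] using
    phiDerivIso_symm_mul_le hp hδ one_le_two (u := u / 2) (by linarith)

theorem phiDerivIso_symm_le_of_le_mul (hp : 1 < p) (hδ : 0 ≤ δ) {K x t : ℝ} (hK : 1 ≤ K)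
    (hx : 0 ≤ x) (h : t ≤ K * phiDeriv p δ x) :
    (phiDerivIso hp hδ).symm t ≤ K ^ (lowerIndex p)⁻¹ * x := by
  calc (phiDerivIso hp hδ).symm t ≤ (phiDerivIso hp hδ).symm (K * phiDerivIso hp hδ x) :=
        (phiDerivIso hp hδ).symm.monotone (by simpa using h)
    _ ≤ K ^ (lowerIndex p)⁻¹ * x := by
        simpa only [OrderIso.symm_apply_apply] using
          phiDerivIso_symm_mul_le hp hδ hK (u := phiDerivIso hp hδ x)
            (by simpa using phiDeriv_nonneg hδ hx)

theorem le_phiDerivIso_symm_of_le_mul (hp : 1 < p) (hδ : 0 ≤ δ) {K x t : ℝ} (hK : 1 ≤ K)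
    (ht : 0 ≤ t) (h : phiDeriv p δ x ≤ K * t) :
    x ≤ K ^ (lowerIndex p)⁻¹ * (phiDerivIso hp hδ).symm t := by
  calc x = (phiDerivIso hp hδ).symm (phiDerivIso hp hδ x) :=
        ((phiDerivIso hp hδ).symm_apply_apply x).symm
    _ ≤ (phiDerivIso hp hδ).symm (K * t) := (phiDerivIso hp hδ).symm.monotone (by simpa using h)
    _ ≤ K ^ (lowerIndex p)⁻¹ * (phiDerivIso hp hδ).symm t := phiDerivIso_symm_mul_le hp hδ hK ht

end PhiDeriv

section Shift

variable {p δ A : ℝ}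

theorem le_doublingConst_mul_add (hp : 1 < p) (hδ : 0 ≤ δ) (hA : 0 ≤ A) {R t : ℝ} (ht : 0 < t)
    (hR : phiDeriv p δ R = phiDeriv p δ A + t) :
    R ≤ doublingConst p * (A + R * (t / (phiDeriv p δ A + t))) := by
  set c := phiDeriv p δ A
  have hc : 0 ≤ c := phiDeriv_nonneg hδ hA
  have hQ := two_le_doublingConst hp
  have hR0 : 0 < R := (phiDeriv_strictMono hp hδ).lt_iff_lt.1 (by rw [phiDeriv_zero, hR]; linarith)
  have hG0 : 0 ≤ R * (t / (c + t)) := mul_nonneg hR0.le (div_nonneg ht.le (by linarith))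
  rcases le_total c t with hct | htc
  · have hfrac : 1 ≤ 2 * (t / (c + t)) := by
      rw [← mul_div_assoc, le_div_iff₀ (by linarith)]; linarith
    nlinarith [mul_nonneg (by linarith : (0:ℝ) ≤ doublingConst p - 2) hG0]
  · -- `φ'(R) = c + t ≤ 2 φ'(A) ≤ φ'(doublingConst p * A)`
    have hscale := rpow_lowerIndex_mul_phiDeriv_le (p := p) (Λ := doublingConst p) hδ
      (by linarith) hA
    rw [doublingConst, ← Real.rpow_mul zero_le_two, inv_mul_cancel₀ (lowerIndex_pos hp).ne',
      Real.rpow_one] at hscale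
    have hRA : R ≤ doublingConst p * A :=
      (phiDeriv_strictMono hp hδ).le_iff_le.1 (by rw [hR]; exact le_trans (by linarith) hscale)
    nlinarith

theorem phiDeriv_shift_comparable (hp : 1 < p) (hδ : 0 ≤ δ) (hA : 0 ≤ A) {R t : ℝ}
    (ht : 0 < t) (hR : phiDeriv p δ R = phiDeriv p δ A + t) :
    t ≤ doublingConst p ^ |p - 2| * phiDeriv p (δ + A) (R * (t / (phiDeriv p δ A + t))) ∧
      phiDeriv p (δ + A) (R * (t / (phiDeriv p δ A + t))) ≤ doublingConst p ^ |p - 2| * t := by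
  set c := phiDeriv p δ A
  set G := R * (t / (c + t))
  have hc : 0 ≤ c := phiDeriv_nonneg hδ hA
  have hQ := two_le_doublingConst hp
  have hR0 : 0 < R := (phiDeriv_strictMono hp hδ).lt_iff_lt.1 (by rw [phiDeriv_zero, hR]; linarith)
  have hAR : A ≤ R := (phiDeriv_strictMono hp hδ).le_iff_le.1 (by rw [hR]; linarith)
  have hG0 : 0 < G := mul_pos hR0 (div_pos ht (by linarith))
  have hGR : G ≤ R := mul_le_of_le_one_right hR0.le ((div_le_one (by linarith)).2 (by linarith))
  have ht_eq : t = (δ + R) ^ (p - 2) * G := by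
    rw [phiDeriv_of_nonneg hR0.le] at hR
    simp only [G, ← mul_assoc, hR]
    field_simp
  have hRle : R ≤ doublingConst p * (A + G) := le_doublingConst_mul_add hp hδ hA ht hR
  have hδQ : δ ≤ doublingConst p * δ := le_mul_of_one_le_left hδ (by linarith)
  have hRQ : 2 * R ≤ doublingConst p * R := mul_le_mul_of_nonneg_right hQ hR0.le
  have hx : 0 < δ + R := by linarith
  have hy : 0 < δ + A + G := by linarith
  have hQ0 : 0 < doublingConst p := by linarith
  have hxy : δ + R ≤ doublingConst p * (δ + A + G) := by linarith
  have hyx : δ + A + G ≤ doublingConst p * (δ + R) := by linarith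
  rw [phiDeriv_of_nonneg hG0.le]
  constructor
  · calc t = (δ + R) ^ (p - 2) * G := ht_eq
      _ ≤ doublingConst p ^ |p - 2| * (δ + A + G) ^ (p - 2) * G := by
        gcongr; exact rpow_le_rpow_abs_mul_rpow _ hx hy hQ0 hxy hyx
      _ = _ := by ring
  · calc (δ + A + G) ^ (p - 2) * G
        _ ≤ doublingConst p ^ |p - 2| * (δ + R) ^ (p - 2) * G := by
          gcongr; exact rpow_le_rpow_abs_mul_rpow _ hy hx hQ0 hyx hxy
        _ = _ := by rw [ht_eq]; ring

theorem phiDerivIso_symm_comparable (hp : 1 < p) (hδ : 0 ≤ δ) (hA : 0 ≤ A) {t : ℝ}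
    (ht : 0 ≤ t) :
    (phiDerivIso hp (add_nonneg hδ hA)).symm t ≤ shiftConst p *
        ((phiDerivIso hp hδ).symm (phiDeriv p δ A + t) * (t / (phiDeriv p δ A + t))) ∧
      (phiDerivIso hp hδ).symm (phiDeriv p δ A + t) * (t / (phiDeriv p δ A + t)) ≤
        shiftConst p * (phiDerivIso hp (add_nonneg hδ hA)).symm t := by
  have hc := phiDeriv_nonneg (p := p) hδ hA
  rcases ht.eq_or_lt with rfl | ht
  · simp
  have hR : phiDeriv p δ ((phiDerivIso hp hδ).symm (phiDeriv p δ A + t)) =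
      phiDeriv p δ A + t := by
    have h := (phiDerivIso hp hδ).apply_symm_apply (phiDeriv p δ A + t)
    rwa [coe_phiDerivIso] at h
  have hK : 1 ≤ doublingConst p ^ |p - 2| :=
    Real.one_le_rpow (by linarith [two_le_doublingConst hp]) (abs_nonneg _)
  have hG0 : 0 ≤ (phiDerivIso hp hδ).symm (phiDeriv p δ A + t) * (t / (phiDeriv p δ A + t)) :=
    mul_nonneg ((phiDerivIso hp hδ).symm_nonneg (by simp) (by linarith))
      (div_nonneg ht.le (by linarith))
  obtain ⟨h₁, h₂⟩ := phiDeriv_shift_comparable hp hδ hA ht hR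
  exact ⟨phiDerivIso_symm_le_of_le_mul hp _ hK hG0 h₁,
    le_phiDerivIso_symm_of_le_mul hp _ hK ht.le h₂⟩

end Shift

theorem fconj_congr {ψ ψ' : ℝ → ℝ} (h : EqOn ψ ψ' (Ici 0)) : fconj ψ = fconj ψ' :=
  funext fun t => congrArg sSup (image_congr fun s hs => by rw [h hs])

theorem fconj_phiFn {p δ : ℝ} (hp : 1 < p) (hδ : 0 ≤ δ) :
    fconj (phiFn p δ) = fconj (primitive (phiDerivIso hp hδ)) := by
  refine fconj_congr fun t (ht : 0 ≤ t) => integral_congr fun s hs => ?_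
  rw [uIcc_of_le ht] at hs
  simp [phiDeriv_of_nonneg hs.1]

theorem shiftPhi_eqOn {p δ A : ℝ} (hA : 0 ≤ A) :
    EqOn (shiftPhi p δ A) (phiFn p (δ + A)) (Ici 0) := by
  refine fun t (ht : 0 ≤ t) => integral_congr fun s hs => ?_
  rw [uIcc_of_le ht] at hs
  rcases (add_nonneg hA hs.1).eq_or_lt with h | h
  · obtain rfl : s = 0 := by linarith [hs.1]
    simp
  · rw [← add_assoc]
    field_simp

theorem stmt7 (d : ℕ) (p δ : ℝ) (hp : 1 < p) (hδ : 0 ≤ δ) :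
    ∃ c > (0:ℝ), ∃ C > (0:ℝ), ∀ a : EuclideanSpace ℝ (Fin d), ∀ t ≥ (0:ℝ),
      c * fconj (shiftPhi p δ ‖a‖) t ≤
        shiftOf (fconj (phiFn p δ)) ‖(δ + ‖a‖) ^ (p - 2) • a‖ t ∧
      shiftOf (fconj (phiFn p δ)) ‖(δ + ‖a‖) ^ (p - 2) • a‖ t ≤
        C * fconj (shiftPhi p δ ‖a‖) t := by
  have hQ : 0 < doublingConst p := by linarith [two_le_doublingConst hp]
  have hB : 0 < shiftConst p := by linarith [one_le_shiftConst hp]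
  refine ⟨(2 * doublingConst p * shiftConst p)⁻¹, by positivity,
    2 * doublingConst p * shiftConst p, by positivity, fun a t ht => ?_⟩
  have hA := norm_nonneg a
  have hc := phiDeriv_nonneg (p := p) hδ hA
  have hdouble := phiDerivIso_symm_le_doublingConst_mul hp (add_nonneg hδ hA) ht
  rw [norm_rpow_smul hδ, fconj_congr (shiftPhi_eqOn hA), fconj_phiFn hp (add_nonneg hδ hA),
    fconj_phiFn hp hδ, inv_mul_le_iff₀ (by positivity)]
  exact ⟨fconj_primitive_le_mul_shiftOf (by simp) (by simp) hc ht hQ.le hB.le hdouble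
      (phiDerivIso_symm_comparable hp hδ hA (by linarith)).1,
    shiftOf_le_mul_fconj_primitive (by simp) (by simp) hc ht hQ.le hB.le hdouble
      (phiDerivIso_symm_comparable hp hδ hA ht).2⟩
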